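/- arXiv:1801.06282 — 2 statements merged into one kernel-verified Lean document; each statement's English description precedes it below -/
import Mathlib

section
/- Let Φ be a real n×n matrix. If Φ is Schur-stable (all eigenvalues have modulus strictly less than 1), then for any positive definite M the discrete Lyapunov equation U − Φ U Φᵀ = M has a unique symmetric positive definite solution U. -/
open Matrix Filter

attribute [local instance] Matrix.linftyOpNormedAddCommGroup Matrix.linftyOpNormedRing
  Matrix.linftyOpNormedAlgebra Matrix.linftyOpNormedSpace

/-- A real square matrix is Schur-stable if every complex eigenvalue has modulus `< 1`. -/
def SchurStable {n : ℕ} (Φ : Matrix (Fin n) (Fin n) ℝ) : Prop :=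
  ∀ μ ∈ spectrum ℂ (Φ.map (algebraMap ℝ ℂ)), ‖μ‖ < 1

/-- Geometric decay of powers of a complex matrix with spectral radius `< 1`. -/
lemma aux_pow_bound {n : ℕ} (A : Matrix (Fin n) (Fin n) ℂ)
    (h : ∀ μ ∈ spectrum ℂ A, ‖μ‖ < 1) :
    ∃ C r : ℝ, 0 ≤ C ∧ 0 ≤ r ∧ r < 1 ∧ ∀ k, ‖A ^ k‖ ≤ C * r ^ k := by
  haveI : CompleteSpace (Matrix (Fin n) (Fin n) ℂ) := FiniteDimensional.complete ℂ _
  have hfin := Matrix.finite_spectrum (R := ℂ) A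
  set r0 : NNReal := hfin.toFinset.sup fun μ => ‖μ‖₊ with hr0def
  have hr0 : r0 < 1 := by
    rw [hr0def, Finset.sup_lt_iff (by norm_num : (⊥ : NNReal) < 1)]
    intro μ hμ
    have := h μ (hfin.mem_toFinset.mp hμ)
    exact_mod_cast this
  set r : ℝ := ((r0 : ℝ) + 1) / 2 with hrdef
  have hr0R : (r0 : ℝ) < 1 := by exact_mod_cast hr0
  have hr_nonneg : 0 ≤ r := by positivity
  have hr_lt : r < 1 := by rw [hrdef]; linarith
  have hρr : spectralRadius ℂ A < (r.toNNReal : ENNReal) := by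
    have h2 : r0 < r.toNNReal := by
      rw [← NNReal.coe_lt_coe, Real.coe_toNNReal r hr_nonneg]
      rw [hrdef]; linarith
    calc spectralRadius ℂ A ≤ (r0 : ENNReal) := by
          apply iSup₂_le; intro μ hμ
          exact_mod_cast ENNReal.coe_le_coe.2 (Finset.le_sup (hfin.mem_toFinset.mpr hμ))
      _ < (r.toNNReal : ENNReal) := by exact_mod_cast h2
  have hev := (spectrum.pow_nnnorm_pow_one_div_tendsto_nhds_spectralRadius A).eventually_lt_const hρr
  rw [Filter.eventually_atTop] at hev
  obtain ⟨N, hN⟩ := hev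
  have hbound : ∀ k, N + 1 ≤ k → ‖A ^ k‖ ≤ r ^ k := by
    intro k hk
    have hk0 : k ≠ 0 := by omega
    have h1 := hN k (by omega)
    have h2 : (‖A ^ k‖₊ : ENNReal) ≤ (r.toNNReal : ENNReal) ^ (k : ℕ) := by
      have h2' := ENNReal.rpow_le_rpow h1.le (by positivity : (0:ℝ) ≤ (k:ℝ))
      rw [← ENNReal.rpow_mul, one_div, inv_mul_cancel₀ (by exact_mod_cast hk0),
        ENNReal.rpow_one, ENNReal.rpow_natCast] at h2'
      exact h2'
    have h3 : ‖A ^ k‖₊ ≤ r.toNNReal ^ k := by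
      rw [← ENNReal.coe_pow, ENNReal.coe_le_coe] at h2
      exact h2
    calc ‖A ^ k‖ = ((‖A ^ k‖₊ : NNReal) : ℝ) := rfl
      _ ≤ ((r.toNNReal ^ k : NNReal) : ℝ) := by exact_mod_cast h3
      _ = r ^ k := by push_cast [Real.coe_toNNReal r hr_nonneg]; ring
  have hrpos : 0 < r := by rw [hrdef]; positivity
  set C : ℝ := max 1 (((Finset.range (N + 2)).sup' (by simp) fun k => ‖A ^ k‖ / r ^ k)) with hCdef
  refine ⟨C, r, le_trans zero_le_one (le_max_left _ _), hr_nonneg, hr_lt, fun k => ?_⟩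
  by_cases hk : k ≤ N + 1
  · have hmem : k ∈ Finset.range (N + 2) := Finset.mem_range.mpr (by omega)
    have hle := Finset.le_sup' (fun k => ‖A ^ k‖ / r ^ k) hmem
    have h4 : ‖A ^ k‖ / r ^ k ≤ C := le_trans hle (le_max_right _ _)
    calc ‖A ^ k‖ = (‖A ^ k‖ / r ^ k) * r ^ k := by field_simp
      _ ≤ C * r ^ k := mul_le_mul_of_nonneg_right h4 (by positivity)
  · have hC1 : 1 ≤ C := le_max_left _ _
    have := hbound k (by omega)
    nlinarith [pow_nonneg hr_nonneg k]

lemma aux_nnnorm_map {n : ℕ} (B : Matrix (Fin n) (Fin n) ℝ) :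
    ‖B.map (algebraMap ℝ ℂ)‖₊ = ‖B‖₊ := by
  simp only [Matrix.linfty_opNNNorm_def, Matrix.map_apply]
  congr 1
  ext i
  congr 1
  ext j
  simp [Complex.nnnorm_real]

lemma aux_map_pow {n : ℕ} (B : Matrix (Fin n) (Fin n) ℝ) (k : ℕ) :
    (B ^ k).map (algebraMap ℝ ℂ) = (B.map (algebraMap ℝ ℂ)) ^ k := by
  have h1 : ∀ D : Matrix (Fin n) (Fin n) ℝ, D.map (algebraMap ℝ ℂ) = (algebraMap ℝ ℂ).mapMatrix D :=
    fun _ => rfl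
  rw [h1, h1, ← map_pow]

lemma schur_transpose {n : ℕ} {Φ : Matrix (Fin n) (Fin n) ℝ} (h : SchurStable Φ) :
    SchurStable Φᵀ := by
  intro μ hμ
  apply h μ
  rw [spectrum.mem_iff] at hμ ⊢
  intro hunit
  apply hμ
  have : algebraMap ℂ (Matrix (Fin n) (Fin n) ℂ) μ - Φᵀ.map (algebraMap ℝ ℂ) =
      (algebraMap ℂ (Matrix (Fin n) (Fin n) ℂ) μ - Φ.map (algebraMap ℝ ℂ))ᵀ := by
    rw [Matrix.transpose_sub, Matrix.transpose_map]
    congr 1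
    rw [Matrix.algebraMap_eq_diagonal, Matrix.diagonal_transpose]
  rw [this, Matrix.isUnit_iff_isUnit_det, Matrix.det_transpose,
    ← Matrix.isUnit_iff_isUnit_det]
  exact hunit

lemma aux_pow_bound_real {n : ℕ} (Φ : Matrix (Fin n) (Fin n) ℝ) (h : SchurStable Φ) :
    ∃ C r : ℝ, 0 ≤ C ∧ 0 ≤ r ∧ r < 1 ∧ ∀ k, ‖Φ ^ k‖ ≤ C * r ^ k := by
  obtain ⟨C, r, hC, hr0, hr1, hb⟩ := aux_pow_bound (Φ.map (algebraMap ℝ ℂ)) h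
  refine ⟨C, r, hC, hr0, hr1, fun k => ?_⟩
  have : ‖Φ ^ k‖ = ‖(Φ.map (algebraMap ℝ ℂ)) ^ k‖ := by
    rw [← aux_map_pow]
    exact (congrArg NNReal.toReal (aux_nnnorm_map (Φ ^ k))).symm
  rw [this]
  exact hb k

lemma aux_hasSum_linearMap {E F : Type*} [NormedAddCommGroup E] [NormedSpace ℝ E]
    [FiniteDimensional ℝ E] [NormedAddCommGroup F] [NormedSpace ℝ F]
    (L : E →ₗ[ℝ] F) {f : ℕ → E} {x : E} (h : HasSum f x) :
    HasSum (fun k => L (f k)) (L x) :=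
  (LinearMap.toContinuousLinearMap L).hasSum h

/-- If `Φ` is Schur-stable, then for any symmetric positive definite `M` the discrete
Lyapunov (Stein) equation `U - Φ U Φᵀ = M` has a unique symmetric positive definite
solution `U`. -/
theorem stein_unique_posdef_solution {n : ℕ} (Φ : Matrix (Fin n) (Fin n) ℝ)
    (hΦ : SchurStable Φ) (M : Matrix (Fin n) (Fin n) ℝ) (hM : M.PosDef) :
    ∃! U : Matrix (Fin n) (Fin n) ℝ,
      U.IsSymm ∧ U.PosDef ∧ U - Φ * U * Φᵀ = M := by
  haveI : CompleteSpace (Matrix (Fin n) (Fin n) ℝ) := FiniteDimensional.complete ℝ _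
  obtain ⟨C₁, r₁, hC₁, hr₁0, hr₁1, hb₁⟩ := aux_pow_bound_real Φ hΦ
  obtain ⟨C₂, r₂, hC₂, hr₂0, hr₂1, hb₂⟩ := aux_pow_bound_real Φᵀ (schur_transpose hΦ)
  have hrr0 : 0 ≤ r₁ * r₂ := mul_nonneg hr₁0 hr₂0
  have hrr1 : r₁ * r₂ < 1 := lt_of_le_of_lt (mul_le_of_le_one_right hr₁0 hr₂1.le) hr₁1
  set f : ℕ → Matrix (Fin n) (Fin n) ℝ := fun k => Φ ^ k * M * Φᵀ ^ k with hfdef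
  have hprodnorm : ∀ (X : Matrix (Fin n) (Fin n) ℝ) (k : ℕ),
      ‖Φ ^ k * X * Φᵀ ^ k‖ ≤ (C₁ * ‖X‖ * C₂) * (r₁ * r₂) ^ k := by
    intro X k
    have h1 := hb₁ k
    have h2 := hb₂ k
    calc ‖Φ ^ k * X * Φᵀ ^ k‖ ≤ ‖Φ ^ k‖ * ‖X‖ * ‖Φᵀ ^ k‖ :=
          le_trans (norm_mul_le _ _)
            (mul_le_mul_of_nonneg_right (norm_mul_le _ _) (norm_nonneg _))
      _ ≤ (C₁ * r₁ ^ k) * ‖X‖ * (C₂ * r₂ ^ k) := by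
          gcongr
      _ = (C₁ * ‖X‖ * C₂) * (r₁ * r₂) ^ k := by rw [mul_pow]; ring
  have hgeom : Summable fun k : ℕ => (C₁ * ‖M‖ * C₂) * (r₁ * r₂) ^ k :=
    (summable_geometric_of_lt_one hrr0 hrr1).mul_left _
  have hsum : Summable f :=
    Summable.of_norm (Summable.of_nonneg_of_le (fun k => norm_nonneg _)
      (fun k => hprodnorm M k) hgeom)
  set U : Matrix (Fin n) (Fin n) ℝ := ∑' k, f k with hUdef
  have hHasSum : HasSum f U := hsum.hasSum
  have hMsymm : Mᵀ = M := by
    have h := hM.1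
    rwa [Matrix.IsHermitian, Matrix.conjTranspose_eq_transpose_of_trivial] at h
  have hfsymm : ∀ k, (f k)ᵀ = f k := by
    intro k
    simp [hfdef, Matrix.transpose_mul, Matrix.transpose_pow, hMsymm, mul_assoc]
  have hUsymm : U.IsSymm := by
    have h1 : HasSum (fun k => (f k)ᵀ) Uᵀ :=
      aux_hasSum_linearMap ((Matrix.transposeLinearEquiv (Fin n) (Fin n) ℝ ℝ).toLinearMap) hHasSum
    rw [Matrix.IsSymm]
    exact HasSum.unique (by simpa [hfsymm] using h1) hHasSum
  -- the Stein equation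
  have hstep : ∀ k, Φ * f k * Φᵀ = f (k + 1) := by
    intro k
    simp only [hfdef]
    rw [pow_succ' Φ, pow_succ Φᵀ]
    simp only [mul_assoc]
  have hL : HasSum (fun k => f (k + 1)) (Φ * U * Φᵀ) := by
    have h := aux_hasSum_linearMap
      ({ toFun := fun X => Φ * X * Φᵀ
         map_add' := fun X Y => by simp [Matrix.mul_add, Matrix.add_mul]
         map_smul' := fun c X => by
           simp [Matrix.mul_smul, Matrix.smul_mul] } :
        Matrix (Fin n) (Fin n) ℝ →ₗ[ℝ] Matrix (Fin n) (Fin n) ℝ) hHasSum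
    simp only [LinearMap.coe_mk, AddHom.coe_mk] at h
    simp only [hstep] at h
    exact h
  have heq : U - Φ * U * Φᵀ = M := by
    have h0 : U = f 0 + ∑' k, f (k + 1) := Summable.tsum_eq_zero_add hsum
    have h1 : ∑' k, f (k + 1) = Φ * U * Φᵀ := hL.tsum_eq
    have hf0 : f 0 = M := by simp [hfdef]
    rw [hf0, h1] at h0
    nth_rewrite 1 [h0]
    exact add_sub_cancel_right _ _
  -- positivity
  have hPS : ∀ k, (f k).PosSemidef := by
    intro k
    have h := hM.posSemidef.mul_mul_conjTranspose_same (Φ ^ k)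
    simpa [hfdef, Matrix.conjTranspose_eq_transpose_of_trivial, Matrix.transpose_pow] using h
  have hUpos : U.PosDef := by
    rw [Matrix.posDef_iff_dotProduct_mulVec]
    constructor
    · rw [Matrix.IsHermitian, Matrix.conjTranspose_eq_transpose_of_trivial]
      exact hUsymm
    · intro x hx
      have hq : HasSum (fun k => x ⬝ᵥ f k *ᵥ x) (x ⬝ᵥ U *ᵥ x) := by
        have h := aux_hasSum_linearMap
          ({ toFun := fun B => x ⬝ᵥ B *ᵥ x
             map_add' := fun B C => by simp [Matrix.add_mulVec, dotProduct_add]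
             map_smul' := fun c B => by
               simp [Matrix.smul_mulVec, dotProduct_smul] } :
            Matrix (Fin n) (Fin n) ℝ →ₗ[ℝ] ℝ) hHasSum
        simpa only [LinearMap.coe_mk, AddHom.coe_mk] using h
      have hq0 : ∀ k, 0 ≤ x ⬝ᵥ f k *ᵥ x := by
        intro k
        have := Matrix.PosSemidef.dotProduct_mulVec_nonneg (hPS k) x
        simpa using this
      have hge : x ⬝ᵥ f 0 *ᵥ x ≤ x ⬝ᵥ U *ᵥ x := by
        have h5 := Summable.le_tsum hq.summable 0 (fun j _ => hq0 j)
        rwa [hq.tsum_eq] at h5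
      have hpos : 0 < x ⬝ᵥ f 0 *ᵥ x := by
        have := hM.dotProduct_mulVec_pos hx
        simpa [hfdef] using this
      simpa using lt_of_lt_of_le hpos hge
  refine ⟨U, ⟨hUsymm, hUpos, heq⟩, ?_⟩
  rintro V ⟨hVsymm, hVpos, hVeq⟩
  set D : Matrix (Fin n) (Fin n) ℝ := V - U with hDdef
  have hD : D = Φ * D * Φᵀ := by
    have h6 : D - Φ * D * Φᵀ = (V - Φ * V * Φᵀ) - (U - Φ * U * Φᵀ) := by
      simp only [hDdef, Matrix.mul_sub, Matrix.sub_mul]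
      abel
    rw [hVeq, heq, sub_self] at h6
    rwa [sub_eq_zero] at h6
  have hDk : ∀ k, D = Φ ^ k * D * Φᵀ ^ k := by
    intro k
    induction k with
    | zero => simp
    | succ k ih =>
      calc D = Φ * D * Φᵀ := hD
        _ = Φ * (Φ ^ k * D * Φᵀ ^ k) * Φᵀ := by rw [← ih]
        _ = Φ ^ (k + 1) * D * Φᵀ ^ (k + 1) := by
            rw [pow_succ' Φ, pow_succ Φᵀ]
            simp only [mul_assoc]
  have hnormD : ∀ k, ‖D‖ ≤ (C₁ * ‖D‖ * C₂) * (r₁ * r₂) ^ k := by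
    intro k
    calc ‖D‖ = ‖Φ ^ k * D * Φᵀ ^ k‖ := by rw [← hDk k]
      _ ≤ (C₁ * ‖D‖ * C₂) * (r₁ * r₂) ^ k := hprodnorm D k
  have htend : Tendsto (fun k : ℕ => (C₁ * ‖D‖ * C₂) * (r₁ * r₂) ^ k) atTop (nhds 0) := by
    have h7 := tendsto_pow_atTop_nhds_zero_of_lt_one hrr0 hrr1
    simpa using h7.const_mul (C₁ * ‖D‖ * C₂)
  have hDle : ‖D‖ ≤ 0 := ge_of_tendsto' htend hnormD
  have : D = 0 := norm_le_zero_iff.mp hDle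
  rw [hDdef, sub_eq_zero] at this
  exact this
end

section
/- If U and M are symmetric positive definite matrices with U − M positive semidefinite, and Φ = (U−M)^{1/2} O U^{-1/2} for an orthogonal matrix O, then Φ is Schur-stable: every eigenvalue of Φ has modulus strictly less than 1. -/
open Matrix

/-- The positive semidefinite square root of a positive semidefinite matrix
(the definition `Matrix.PosSemidef.sqrt` of the older Mathlib, since removed). -/
noncomputable def Matrix.PosSemidef.sqrt {n : Type*} [Fintype n] [DecidableEq n]
    {A : Matrix n n ℝ} (hA : A.PosSemidef) : Matrix n n ℝ :=
  hA.1.eigenvectorUnitary.1 * diagonal ((↑) ∘ (√·) ∘ hA.1.eigenvalues) *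
  (star hA.1.eigenvectorUnitary : Matrix n n ℝ)

/-! Write `S = (U - M)^{1/2}` and `T = U^{-1/2}`. Since `T U T = 1` and `O Oᵀ = 1`,
`Φ U Φᵀ = S O (T U T) Oᵀ S = S² = U - M`. If `μ` is an eigenvalue of `Φ`, take `v ≠ 0` with
`Φᴴ v = μ̄ v`; evaluating this Stein identity on `v` gives `|μ|² vᴴUv = vᴴUv - vᴴMv`, and since both
quadratic forms are positive, `|μ| < 1`. -/

open scoped ComplexOrder

namespace Matrix

variable {n : Type*} [Fintype n] [DecidableEq n]

lemma PosSemidef.sqrt_mul_self {A : Matrix n n ℝ} (hA : A.PosSemidef) :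
    hA.sqrt * hA.sqrt = A := by
  have hQ : (star hA.1.eigenvectorUnitary : Matrix n n ℝ) * hA.1.eigenvectorUnitary.1 = 1 :=
    Unitary.coe_star_mul_self _
  have hD : diagonal ((↑) ∘ (√·) ∘ hA.1.eigenvalues) *
      diagonal ((↑) ∘ (√·) ∘ hA.1.eigenvalues) =
      diagonal (RCLike.ofReal ∘ hA.1.eigenvalues : n → ℝ) := by
    rw [diagonal_mul_diagonal]
    congr 1
    funext i
    simp [Real.mul_self_sqrt (hA.eigenvalues_nonneg i)]
  conv_rhs => rw [hA.1.spectral_theorem, Unitary.conjStarAlgAut_apply]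
  simp only [PosSemidef.sqrt, Matrix.mul_assoc]
  rw [← Matrix.mul_assoc (star _ : Matrix n n ℝ), hQ, Matrix.one_mul,
    ← Matrix.mul_assoc (diagonal _), hD]

lemma PosSemidef.transpose_sqrt {A : Matrix n n ℝ} (hA : A.PosSemidef) :
    hA.sqrtᵀ = hA.sqrt := by
  rw [← conjTranspose_eq_transpose_of_trivial]
  simp [PosSemidef.sqrt, star_eq_conjTranspose, Matrix.mul_assoc]

lemma PosDef.sqrt_inv_mul_mul_sqrt_inv {U : Matrix n n ℝ} (hU : U.PosDef) :
    hU.inv.posSemidef.sqrt * U * hU.inv.posSemidef.sqrt = 1 := by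
  set T := hU.inv.posSemidef.sqrt
  have hTTU : T * (T * U) = 1 := by
    rw [← Matrix.mul_assoc, PosSemidef.sqrt_mul_self, nonsing_inv_mul U]
    exact (isUnit_iff_isUnit_det U).1 hU.isUnit
  exact mul_eq_one_comm.1 hTTU

lemma mul_orthogonal_mul_mul_transpose_eq_mul_self {R : Type*} [CommRing R]
    {S O T U : Matrix n n R}
    (hS : Sᵀ = S) (hT : Tᵀ = T) (hO : O * Oᵀ = 1) (hTUT : T * U * T = 1) :
    S * O * T * U * (S * O * T)ᵀ = S * S := by
  calc S * O * T * U * (S * O * T)ᵀ = S * O * (T * U * T) * Oᵀ * S := by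
        simp only [transpose_mul, hS, hT, Matrix.mul_assoc]
    _ = S * S := by rw [hTUT, Matrix.mul_one, Matrix.mul_assoc S, hO, Matrix.mul_one]

lemma PosDef.map_ofReal {𝕜 : Type*} [RCLike 𝕜] {A : Matrix n n ℝ} (hA : A.PosDef) :
    (A.map (algebraMap ℝ 𝕜)).PosDef := by
  set B := hA.posSemidef.sqrt
  have hBB : B * B = A := hA.posSemidef.sqrt_mul_self
  have hB : IsUnit B := isUnit_of_mul_isUnit_left (hBB ▸ hA.isUnit)
  have hBmap : (B.map (algebraMap ℝ 𝕜))ᴴ = B.map (algebraMap ℝ 𝕜) := by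
    rw [← conjTranspose_map _ algebraMap_star_comm, conjTranspose_eq_transpose_of_trivial,
      hA.posSemidef.transpose_sqrt]
  have hA_eq : A.map (algebraMap ℝ 𝕜) = (B.map (algebraMap ℝ 𝕜))ᴴ * B.map (algebraMap ℝ 𝕜) := by
    rw [hBmap, ← Matrix.map_mul, hBB]
  rw [hA_eq]
  exact PosDef.conjTranspose_mul_self _
    (mulVec_injective_iff_isUnit.2 (hB.map (algebraMap ℝ 𝕜).mapMatrix))

lemma exists_mulVec_eq_smul_of_mem_spectrum {K : Type*} [Field K] {A : Matrix n n K} {μ : K}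
    (hμ : μ ∈ spectrum K A) : ∃ v ≠ 0, A *ᵥ v = μ • v := by
  rw [← spectrum_toLin', ← Module.End.hasEigenvalue_iff_mem_spectrum] at hμ
  obtain ⟨v, hv, hv0⟩ := hμ.exists_hasEigenvector
  exact ⟨v, hv0, Module.End.mem_eigenspace_iff.1 hv⟩

theorem norm_lt_one_of_mem_spectrum_of_mul_mul_conjTranspose_eq_sub {𝕜 : Type*} [RCLike 𝕜]
    {A U M : Matrix n n 𝕜}
    (hU : U.PosDef) (hM : M.PosDef) (hAUM : A * U * Aᴴ = U - M) {μ : 𝕜}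
    (hμ : μ ∈ spectrum 𝕜 A) : ‖μ‖ < 1 := by
  have hμ' : star μ ∈ spectrum 𝕜 Aᴴ := by
    rwa [← star_eq_conjTranspose, spectrum.map_star, Set.mem_star, star_star]
  obtain ⟨v, hv, hAv⟩ := exists_mulVec_eq_smul_of_mem_spectrum hμ'
  have hvA : star v ᵥ* A = μ • star v := by
    rw [← conjTranspose_conjTranspose A, ← star_mulVec, hAv, star_smul, star_star]
  have hquad : star v ⬝ᵥ (U - M) *ᵥ v = (‖μ‖ ^ 2 : ℝ) * (star v ⬝ᵥ U *ᵥ v) :=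
    calc star v ⬝ᵥ (U - M) *ᵥ v = star v ⬝ᵥ A *ᵥ (U *ᵥ (Aᴴ *ᵥ v)) := by
          rw [← hAUM, mulVec_mulVec, mulVec_mulVec]
      _ = (star v ᵥ* A) ⬝ᵥ U *ᵥ (Aᴴ *ᵥ v) := dotProduct_mulVec _ _ _
      _ = μ * star μ * (star v ⬝ᵥ U *ᵥ v) := by
          rw [hvA, hAv, mulVec_smul, smul_dotProduct, dotProduct_smul, smul_eq_mul, smul_eq_mul,
            mul_assoc]
      _ = (‖μ‖ ^ 2 : ℝ) * (star v ⬝ᵥ U *ᵥ v) := by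
          rw [RCLike.star_def, RCLike.mul_conj, RCLike.ofReal_pow]
  have hre := congrArg RCLike.re hquad
  rw [sub_mulVec, dotProduct_sub, map_sub, RCLike.re_ofReal_mul] at hre
  have hUv := hU.re_dotProduct_pos hv
  have hMv := hM.re_dotProduct_pos hv
  have hμ2 : ‖μ‖ ^ 2 < 1 := by nlinarith
  exact (sq_lt_one_iff₀ (norm_nonneg μ)).1 hμ2

end Matrix

theorem schurStable_of_mul_mul_transpose_eq_sub {n : ℕ} {Φ U M : Matrix (Fin n) (Fin n) ℝ}
    (hU : U.PosDef) (hM : M.PosDef) (hΦ : Φ * U * Φᵀ = U - M) : SchurStable Φ := by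
  intro μ hμ
  refine norm_lt_one_of_mem_spectrum_of_mul_mul_conjTranspose_eq_sub
    hU.map_ofReal hM.map_ofReal ?_ hμ
  rw [← conjTranspose_map _ algebraMap_star_comm, conjTranspose_eq_transpose_of_trivial,
    ← Matrix.map_mul, ← Matrix.map_mul, hΦ, Matrix.map_sub _ (map_sub _)]

/-- If `U, M` are symmetric positive definite with `U - M` positive semidefinite, `O`
is orthogonal and `Φ = (U - M)^{1/2} O U^{-1/2}`, then `Φ` is Schur-stable: every
eigenvalue of `Φ` has modulus strictly less than 1. -/
theorem parametrized_Phi_is_SchurStable {n : ℕ} (U M O : Matrix (Fin n) (Fin n) ℝ)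
    (hU : U.PosDef) (hM : M.PosDef) (hUM : (U - M).PosSemidef)
    (hO : O * Oᵀ = 1) :
    ∀ Φ : Matrix (Fin n) (Fin n) ℝ,
      Φ = hUM.sqrt * O * (hU.inv.posSemidef.sqrt) →
      SchurStable Φ := by
  rintro Φ rfl
  refine schurStable_of_mul_mul_transpose_eq_sub hU hM ?_
  rw [mul_orthogonal_mul_mul_transpose_eq_mul_self hUM.transpose_sqrt
    hU.inv.posSemidef.transpose_sqrt hO hU.sqrt_inv_mul_mul_sqrt_inv, hUM.sqrt_mul_self]
end
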